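/- Let k_E/k_F be a finite extension of finite fields and ψ a nontrivial additive character of k_F. Fix non-negative integers n, m. Let a, b ∈ k_F^× and c ∈ ℂ^×. If Kl_{ta}^{n,m}(ψ; k_E/k_F) = c · Kl_{tb}^{n,m}(ψ; k_E/k_F) for every t ∈ k_F^×, then c = 1 and a = b. -/

import Mathlib

/-- The Kloosterman sum `Kl_a^{n,m}(ψ; k_E/k_F)`:
the sum of `ψ(Tr(t₁+⋯+t_n))·ψ(s₁+⋯+s_m)` over `t₁,…,t_n ∈ k_E^×` and
`s₁,…,s_m ∈ k_F^×` with `Nr(t₁)⋯Nr(t_n)·s₁⋯s_m = a`. -/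
noncomputable def Kl (kF kE : Type) [Field kF] [Fintype kF] [DecidableEq kF]
    [Field kE] [Fintype kE] [DecidableEq kE] [Algebra kF kE]
    (ψ : AddChar kF ℂ) (n m : ℕ) (a : kF) : ℂ :=
  ∑ t : Fin n → kEˣ, ∑ s : Fin m → kFˣ,
    if (∏ i, Algebra.norm kF ((t i : kE))) * (∏ j, ((s j : kF))) = a then
      ψ (Algebra.trace kF kE (∑ i, ((t i : kE)))) * ψ (∑ j, ((s j : kF)))
    else 0

/-! Against a multiplicative character `χ` of `k_F`, the Mellin transform in `t` factorises:
`∑_t χ(t) Kl_{tu} = χ(u)⁻¹ · g(χ ∘ Nr, ψ ∘ Tr)ⁿ · g(χ, ψ)ᵐ`, with Gauss sums `g` that never vanish.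
So the hypothesis gives `χ(a)⁻¹ = c · χ(b)⁻¹` for every `χ`; the trivial character gives `c = 1`,
and since characters separate the points of `k_F^×`, `a = b`. -/

open Finset

namespace AddChar

lemma map_sum_eq_prod {A M ι : Type*} [AddCommMonoid A] [CommMonoid M] (ψ : AddChar A M)
    (s : Finset ι) (f : ι → A) : ψ (∑ i ∈ s, f i) = ∏ i ∈ s, ψ (f i) := by
  induction s using Finset.cons_induction with
  | empty => simp
  | cons a s ha ih => rw [sum_cons, prod_cons, map_add_eq_mul, ih]

lemma compAddMonoidHom_ne_one {A B M : Type*} [AddMonoid A] [AddMonoid B] [Monoid M]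
    {ψ : AddChar B M} (hψ : ψ ≠ 1) {f : A →+ B} (hf : Function.Surjective f) :
    ψ.compAddMonoidHom f ≠ 1 := fun h =>
  hψ <| compAddMonoidHom_injective_left f hf <| h.trans (by ext; simp)

end AddChar

namespace MulChar

noncomputable def compUnitsHom {R S R' : Type*} [CommMonoid R] [CommMonoid S]
    [CommMonoidWithZero R'] (χ : MulChar R R') (f : Sˣ →* Rˣ) : MulChar S R' :=
  ofUnitHom (χ.toUnitHom.comp f)

@[simp]
lemma compUnitsHom_apply_coe {R S R' : Type*} [CommMonoid R] [CommMonoid S]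
    [CommMonoidWithZero R'] (χ : MulChar R R') (f : Sˣ →* Rˣ) (x : Sˣ) :
    χ.compUnitsHom f x = χ (f x) := by
  simp [compUnitsHom]

lemma sum_units_mul_apply_mul {R R' : Type*} [CommMonoid R] [Fintype Rˣ] [CommSemiring R']
    (χ : MulChar R R') (f : R → R') (u : Rˣ) :
    ∑ t : Rˣ, χ t * f (t * u) = χ ↑(u⁻¹) * ∑ t : Rˣ, χ t * f t := by
  rw [mul_sum]
  refine Fintype.sum_equiv (Equiv.mulRight u) _ _ fun t => ?_
  rw [Equiv.coe_mulRight, ← mul_assoc, ← map_mul, Units.val_mul, mul_left_comm, Units.inv_mul,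
    mul_one]

lemma units_eq_of_forall_apply_eq {M R : Type*} [CommMonoid M] [Finite M] [CommRing R]
    [Nontrivial R] [HasEnoughRootsOfUnity R (Monoid.exponent Mˣ)] {u v : Mˣ}
    (h : ∀ χ : MulChar M R, χ u = χ v) : u = v := by
  by_contra huv
  obtain ⟨χ, hχ⟩ := exists_apply_ne_one_of_hasEnoughRootsOfUnity M R (a := ↑(u * v⁻¹))
    (by rwa [Ne, Units.val_eq_one, mul_inv_eq_one])
  apply hχ
  rw [Units.val_mul, map_mul, h, ← map_mul, ← Units.val_mul, mul_inv_cancel, Units.val_one,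
    map_one]

end MulChar

lemma gaussSum_eq_sum_units {R R' : Type*} [CommRing R] [Fintype R] [Fintype Rˣ] [CommRing R']
    (χ : MulChar R R') (ψ : AddChar R R') : gaussSum χ ψ = ∑ x : Rˣ, χ x * ψ x :=
  (Fintype.sum_of_injective Units.val Units.val_injective _ _
    (fun x hx => by rw [χ.map_nonunit fun ⟨u, hu⟩ => hx ⟨u, hu⟩, zero_mul])
    fun _ => rfl).symm

lemma gaussSum_ne_zero {F R : Type*} [Field F] [Fintype F] [CommRing R] [IsDomain R]
    (hF : (Fintype.card F : R) ≠ 0) (χ : MulChar F R) {ψ : AddChar F R} (hψ : ψ ≠ 1) :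
    gaussSum χ ψ ≠ 0 := by
  rcases eq_or_ne χ 1 with rfl | hχ
  · simp [gaussSum_one_left hψ]
  · exact gaussSum_ne_zero_of_nontrivial hF hχ (.of_ne_one hψ)

section Kloosterman

variable {kF kE : Type} [Field kF] [Fintype kF] [DecidableEq kF]
    [Field kE] [Fintype kE] [DecidableEq kE] [Algebra kF kE]

theorem sum_mulChar_mul_Kl (ψ : AddChar kF ℂ) (n m : ℕ) (χ : MulChar kF ℂ) :
    ∑ t : kFˣ, χ t * Kl kF kE ψ n m t =
      gaussSum (χ.compUnitsHom (Units.map (Algebra.norm kF : kE →* kF)))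
          (ψ.compAddMonoidHom (Algebra.trace kF kE).toAddMonoidHom) ^ n * gaussSum χ ψ ^ m := by
  set χE := χ.compUnitsHom (Units.map (Algebra.norm kF : kE →* kF))
  set ψE := ψ.compAddMonoidHom (Algebra.trace kF kE).toAddMonoidHom
  have summand (ts : Fin n → kEˣ) (ss : Fin m → kFˣ) :
      ∑ t : kFˣ, χ t * (if (∏ i, Algebra.norm kF (ts i : kE)) * ∏ j, (ss j : kF) = t then
        ψ (Algebra.trace kF kE (∑ i, (ts i : kE))) * ψ (∑ j, (ss j : kF)) else 0) =
      (∏ i, χE (ts i) * ψE (ts i)) * ∏ j, χ (ss j) * ψ (ss j) := by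
    have hunit : (∏ i, Algebra.norm kF (ts i : kE)) * ∏ j, (ss j : kF) =
        ↑((∏ i, Units.map (Algebra.norm kF : kE →* kF) (ts i)) * ∏ j, ss j) := by
      simp
    simp only [hunit, Units.val_inj, mul_ite, mul_zero, sum_ite_eq, mem_univ, if_true]
    rw [Units.val_mul, map_mul, Units.coe_prod, Units.coe_prod, map_prod, map_prod, map_sum,
      AddChar.map_sum_eq_prod, AddChar.map_sum_eq_prod, prod_mul_distrib, prod_mul_distrib]
    simp only [χE, ψE, MulChar.compUnitsHom_apply_coe, Units.coe_map,
      AddChar.compAddMonoidHom_apply, LinearMap.toAddMonoidHom_coe]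
    ring
  calc ∑ t : kFˣ, χ t * Kl kF kE ψ n m t
      = ∑ ts : Fin n → kEˣ, ∑ ss : Fin m → kFˣ,
          (∏ i, χE (ts i) * ψE (ts i)) * ∏ j, χ (ss j) * ψ (ss j) := by
        simp only [Kl, mul_sum]
        rw [sum_comm]
        refine sum_congr rfl fun ts _ => ?_
        rw [sum_comm]
        exact sum_congr rfl fun ss _ => summand ts ss
    _ = (∏ _i : Fin n, ∑ x : kEˣ, χE x * ψE x) * ∏ _j : Fin m, ∑ s : kFˣ, χ s * ψ s := by
        rw [Fintype.prod_sum, Fintype.prod_sum, sum_mul_sum]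
    _ = _ := by simp [gaussSum_eq_sum_units]

end Kloosterman

theorem stmt4_general (kF kE : Type) [Field kF] [Fintype kF] [DecidableEq kF]
    [Field kE] [Fintype kE] [DecidableEq kE] [Algebra kF kE]
    (ψ : AddChar kF ℂ) (hψ : ψ ≠ 1) (n m : ℕ) (a b : kFˣ) (c : ℂ)
    (h : ∀ t : kFˣ, Kl kF kE ψ n m ((t : kF) * a) = c * Kl kF kE ψ n m ((t : kF) * b)) :
    c = 1 ∧ a = b := by
  have hψE : ψ.compAddMonoidHom (Algebra.trace kF kE).toAddMonoidHom ≠ 1 :=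
    AddChar.compAddMonoidHom_ne_one hψ (Algebra.trace_surjective kF kE)
  have hχ (χ : MulChar kF ℂ) : χ ↑(a⁻¹) = c * χ ↑(b⁻¹) := by
    have hmellin : ∑ t : kFˣ, χ t * Kl kF kE ψ n m t ≠ 0 := by
      rw [sum_mulChar_mul_Kl]
      exact mul_ne_zero (pow_ne_zero _ (gaussSum_ne_zero (by simp) _ hψE))
        (pow_ne_zero _ (gaussSum_ne_zero (by simp) _ hψ))
    apply mul_right_cancel₀ hmellin
    rw [mul_assoc, ← MulChar.sum_units_mul_apply_mul, ← MulChar.sum_units_mul_apply_mul, mul_sum]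
    exact sum_congr rfl fun t _ => by rw [h t, mul_left_comm]
  have hc1 : c = 1 := by
    simpa only [MulChar.one_apply_coe, mul_one, eq_comm] using hχ 1
  refine ⟨hc1, inv_inj.mp (MulChar.units_eq_of_forall_apply_eq (R := ℂ) fun χ => ?_)⟩
  rw [hχ χ, hc1, one_mul]

/-- If `Kl_{ta}^{n,m} = c · Kl_{tb}^{n,m}` for every `t ∈ k_F^×`, then `c = 1` and `a = b`. -/
theorem stmt4 (kF kE : Type) [Field kF] [Fintype kF] [DecidableEq kF]
    [Field kE] [Fintype kE] [DecidableEq kE] [Algebra kF kE]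
    (ψ : AddChar kF ℂ) (hψ : ψ ≠ 1) (n m : ℕ) (a b : kFˣ) (c : ℂ) (hc : c ≠ 0)
    (h : ∀ t : kFˣ, Kl kF kE ψ n m ((t : kF) * a) = c * Kl kF kE ψ n m ((t : kF) * b)) :
    c = 1 ∧ a = b :=
  stmt4_general kF kE ψ hψ n m a b c h
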